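/- Suppose f is bounded below by m, has L-Lipschitz gradient, and along a sequence of iterates the relation ∇f(U^k) = -Y^k holds for all k; then the augmented Lagrangian values L(U^k, Z^k, Y^k) = f(U^k) + ⟨Y^k, U^k - Z^k⟩_F + (ρ/2)‖U^k - Z^k‖_F² with ρ ≥ L are bounded below by m. -/

import Mathlib

/-! Along the segment from `x` to `y`, the derivative of `f` exceeds its value at `x` by at most
`L t ‖y - x‖²`, so `f` stays below its linearization at `x` plus `L/2 ‖y - x‖²` (the descent
lemma). Applied at `x = Uᵏ`, `y = Zᵏ` with `∇f(Uᵏ) = -Yᵏ` and `L ≤ ρ`, this bounds the augmented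
Lagrangian below by `f(Zᵏ) ≥ m`. -/

open scoped RealInnerProductSpace

section

variable {E : Type*} [NormedAddCommGroup E] [InnerProductSpace ℝ E] [CompleteSpace E]

theorem HasGradientAt.hasDerivAt_comp_add_smul {f : E → ℝ} {g x v : E} {t : ℝ}
    (hf : HasGradientAt f g (x + t • v)) :
    HasDerivAt (fun s : ℝ => f (x + s • v)) ⟪g, v⟫ t := by
  have hline : HasDerivAt (fun s : ℝ => x + s • v) v t := by
    simpa using ((hasDerivAt_id t).smul_const v).const_add x
  exact hf.hasFDerivAt.comp_hasDerivAt t hline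

theorem le_add_inner_gradient_add_of_lipschitz_gradient {f : E → ℝ} {L : ℝ}
    (hf : Differentiable ℝ f) (hlip : ∀ x y, ‖gradient f x - gradient f y‖ ≤ L * ‖x - y‖)
    (x y : E) :
    f y ≤ f x + ⟪gradient f x, y - x⟫ + L / 2 * ‖y - x‖ ^ 2 := by
  set v := y - x
  let φ : ℝ → ℝ := fun t => f (x + t • v) - t * ⟪gradient f x, v⟫ - L / 2 * t ^ 2 * ‖v‖ ^ 2
  let φ' : ℝ → ℝ := fun t => ⟪gradient f (x + t • v) - gradient f x, v⟫ - L * t * ‖v‖ ^ 2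
  have hφ : ∀ t, HasDerivAt φ (φ' t) t := fun t => by
    have hline : HasDerivAt (fun s : ℝ => f (x + s • v)) ⟪gradient f (x + t • v), v⟫ t :=
      (hf _).hasGradientAt.hasDerivAt_comp_add_smul
    refine ((hline.fun_sub ((hasDerivAt_id' t).mul_const ⟪gradient f x, v⟫)).fun_sub
      (((hasDerivAt_pow 2 t).const_mul (L / 2)).mul_const (‖v‖ ^ 2))).congr_deriv ?_
    simp only [φ', inner_sub_left]
    ring
  have hφ'_nonpos : ∀ t, 0 ≤ t → φ' t ≤ 0 := fun t ht => by
    calc φ' t = ⟪gradient f (x + t • v) - gradient f x, v⟫ - L * t * ‖v‖ ^ 2 := rfl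
      _ ≤ ‖gradient f (x + t • v) - gradient f x‖ * ‖v‖ - L * t * ‖v‖ ^ 2 := by
          gcongr; exact real_inner_le_norm _ _
      _ ≤ L * ‖t • v‖ * ‖v‖ - L * t * ‖v‖ ^ 2 := by
          gcongr ?_ * _ - _
          simpa using hlip (x + t • v) x
      _ = 0 := by rw [norm_smul, Real.norm_of_nonneg ht]; ring
  have hanti : AntitoneOn φ (Set.Ici 0) :=
    antitoneOn_of_hasDerivWithinAt_nonpos (convex_Ici 0)
      (fun t _ => (hφ t).continuousAt.continuousWithinAt)
      (fun t _ => (hφ t).hasDerivWithinAt)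
      (fun t ht => hφ'_nonpos t (by rw [interior_Ici] at ht; exact le_of_lt ht))
  have hφ01 : φ 1 ≤ φ 0 := hanti Set.self_mem_Ici (Set.mem_Ici.2 zero_le_one) zero_le_one
  simp only [φ, v, one_smul, zero_smul, add_zero, add_sub_cancel] at hφ01
  linarith

end

theorem auglag_bounded_below_general {d r : ℕ}
    (f : EuclideanSpace ℝ (Fin d × Fin r) → ℝ) (L ρ m : ℝ)
    (hdiff : Differentiable ℝ f)
    (hlip : ∀ U V : EuclideanSpace ℝ (Fin d × Fin r),
      ‖gradient f U - gradient f V‖ ≤ L * ‖U - V‖)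
    (hbdd : ∀ x, m ≤ f x)
    (U Z Y : ℕ → EuclideanSpace ℝ (Fin d × Fin r))
    (hopt : ∀ k, gradient f (U k) = -(Y k))
    (hρ : L ≤ ρ) :
    ∀ k, m ≤ f (U k) + ⟪Y k, U k - Z k⟫ + ρ / 2 * ‖U k - Z k‖ ^ 2 := by
  intro k
  have hdescent := le_add_inner_gradient_add_of_lipschitz_gradient hdiff hlip (U k) (Z k)
  rw [hopt k, inner_neg_left, ← inner_neg_right, neg_sub, norm_sub_rev] at hdescent
  have hρL : L / 2 * ‖U k - Z k‖ ^ 2 ≤ ρ / 2 * ‖U k - Z k‖ ^ 2 := by gcongr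
  linarith [hbdd (Z k)]

theorem auglag_bounded_below {d r : ℕ}
    (f : EuclideanSpace ℝ (Fin d × Fin r) → ℝ) (L ρ m : ℝ)
    (hdiff : Differentiable ℝ f)
    (hlip : ∀ U V : EuclideanSpace ℝ (Fin d × Fin r),
      ‖gradient f U - gradient f V‖ ≤ L * ‖U - V‖)
    (hbdd : ∀ x, m ≤ f x)
    (U Z Y : ℕ → EuclideanSpace ℝ (Fin d × Fin r))
    (hopt : ∀ k, gradient f (U k) = -(Y k))
    (hρ : L ≤ ρ) (hρpos : 0 < ρ) :
    ∀ k, m ≤ f (U k) + ⟪Y k, U k - Z k⟫ + ρ / 2 * ‖U k - Z k‖ ^ 2 :=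
  auglag_bounded_below_general f L ρ m hdiff hlip hbdd U Z Y hopt hρ
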